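/- arXiv:2511.17320 — 2 statements merged into one kernel-verified Lean document; each statement's English description precedes it below -/
import Mathlib

section
/- Let a, b ∈ ℂ⟦z⟧ be formal power series with a ≠ 0, constant coefficient a(0) = 0, and z·a' = a·b². Then the square of the constant coefficient of b equals the order of a, i.e. (b(0))² = ord(a) as complex numbers (ord(a) being a finite positive natural number); in particular b(0) ≠ 0. (This is the reduced-base content of the 'R to R' case of the proposition on local superconformal maps: combined with the twist condition forcing b(0) = 0 whenever the ramification order exceeds 1, it shows that every R-to-R superconformal map is unramified.) -/
/-! With `n = ord a`, the coefficient of `z ^ n` in `z·a' = a·b²` reads `n·aₙ = aₙ·b(0)²`, and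
`aₙ ≠ 0`; since `a(0) = 0`, `n` is positive, so `b(0) ≠ 0`. -/

namespace PowerSeries

variable {R : Type*}

theorem coeff_order_mul [Semiring R] {φ : R⟦X⟧} {n : ℕ} (hφ : φ.order = n) (ψ : R⟦X⟧) :
    coeff n (φ * ψ) = coeff n φ * constantCoeff ψ := by
  rw [coeff_mul, Finset.sum_eq_single_of_mem (n, 0) (by simp), coeff_zero_eq_constantCoeff]
  rintro ⟨i, j⟩ hij hne
  rw [Finset.HasAntidiagonal.mem_antidiagonal] at hij
  have hi : i < n := by
    by_contra! hi
    exact hne (Prod.ext (by omega) (by omega))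
  rw [coeff_of_lt_order i (hφ ▸ by exact_mod_cast hi), zero_mul]

theorem coeff_X_mul_derivative [CommSemiring R] (f : R⟦X⟧) (n : ℕ) :
    coeff n (X * d⁄dX R f) = n * coeff n f := by
  cases n with
  | zero => simp
  | succ n => rw [coeff_succ_X_mul, coeff_derivative, mul_comm]; push_cast; rfl

theorem constantCoeff_eq_order_of_X_mul_derivative_eq [CommRing R] [NoZeroDivisors R]
    {a c : R⟦X⟧} (ha : a ≠ 0) (h : X * d⁄dX R a = a * c) :
    constantCoeff c = a.order.toNat := by
  have hcoeff := congrArg (coeff a.order.toNat) h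
  rw [coeff_X_mul_derivative, coeff_order_mul (coe_toNat_order ha).symm, mul_comm] at hcoeff
  exact (mul_left_cancel₀ (coeff_order ha) hcoeff).symm

end PowerSeries

open PowerSeries

/-- **R to R case of the local superconformal map proposition (reduced base).**
If `a, b ∈ ℂ⟦z⟧` with `a ≠ 0`, `a(0) = 0` and `z·a' = a·b²`, then `ord a` is a
finite positive natural number `n` and `(b(0))² = n` as complex numbers; in
particular `b(0) ≠ 0`. -/
theorem r_to_r_unramified (a b : PowerSeries ℂ)
    (ha : a ≠ 0)
    (h0 : constantCoeff (R := ℂ) a = 0)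
    (h : X * derivative ℂ a = a * b ^ 2) :
    ∃ n : ℕ, 0 < n ∧ a.order = (n : ℕ∞) ∧
      (constantCoeff (R := ℂ) b) ^ 2 = (n : ℂ) ∧ constantCoeff (R := ℂ) b ≠ 0 := by
  have hpos : 0 < a.order.toNat := by
    rw [Nat.pos_iff_ne_zero, ne_eq, ENat.toNat_eq_zero, not_or,
      order_eq_top, ← ne_eq, order_ne_zero_iff_constCoeff_eq_zero]
    exact ⟨h0, ha⟩
  have hb : constantCoeff b ^ 2 = a.order.toNat := by
    rw [← map_pow]
    exact constantCoeff_eq_order_of_X_mul_derivative_eq ha h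
  refine ⟨a.order.toNat, hpos, (coe_toNat_order ha).symm, hb, fun hb0 => ?_⟩
  rw [hb0, zero_pow two_ne_zero, eq_comm, Nat.cast_eq_zero] at hb
  exact hpos.ne' hb
end

section
/- Let W = { h ∈ ℂ((z)) : coeff_{−1}(h) = 0 } be the ℂ-subspace of residueless formal Laurent series. For h, k ∈ W define E(h,k) = ∑_{m ∈ ℤ, m ≠ 0} (1/m)·coeff_{−m−1}(h)·coeff_{m−1}(k). Then: (i) for each h, k only finitely many terms of this sum are nonzero, so E is a well-defined ℂ-bilinear form on W; (ii) E is alternating: E(h,k) = −E(k,h) for all h, k ∈ W; (iii) E is nondegenerate on W: if h ∈ W satisfies E(h,k) = 0 for all k ∈ W, then h = 0. (This is the even component, in coordinates, of the super Givental pairing ⟨[df],[dg]⟩ = Res_{z=0}[df·g] of the super Givental pairing proposition: it realizes the pairing ⟨[df],[dg]⟩ = Res(f'·g) on residueless elements h = f', k = g'.) -/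
/-!
Since `(0 : ℂ)⁻¹ = 0`, the pairing is the finite sum `∑ₘ m⁻¹ · h₋ₘ₋₁ · kₘ₋₁`: finite because the
exponent pairs `(-m - 1, m - 1)` lie on an antidiagonal of two partially well-ordered supports,
bilinear termwise, and alternating under `m ↦ -m`. Pairing `h` with the monomial `z ^ j` picks out
the single term `(j + 1)⁻¹ · h₋ⱼ₋₂`, and `z ^ j` is residueless for every `j ≠ -1`, so a
residueless `h` orthogonal to all of `W` has every coefficient zero.
-/

/-- The even component, in coordinates, of the super Givental pairing:
`E(h,k) = ∑_{m ≠ 0} (1/m) · coeff (-m-1) h · coeff (m-1) k`. -/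
noncomputable def giventalPairing (h k : LaurentSeries ℂ) : ℂ :=
  ∑ᶠ m : ℤ, if m = 0 then 0 else (m : ℂ)⁻¹ * h.coeff (-m - 1) * k.coeff (m - 1)

open Function
open HahnSeries (coeff_add coeff_smul coeff_single_same coeff_single_of_ne single)

theorem HahnSeries.finite_support_coeff_mul_coeff_sub {Γ R : Type*} [AddCommGroup Γ]
    [PartialOrder Γ] [IsOrderedCancelAddMonoid Γ] [MulZeroClass R] (x y : HahnSeries Γ R)
    (a : Γ) : (Function.support fun g => x.coeff g * y.coeff (a - g)).Finite := by
  refine ((Set.AddAntidiagonal.finite_of_isPWO x.isPWO_support y.isPWO_support a).image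
    Prod.fst).subset fun g hg => ⟨(g, a - g), ?_, rfl⟩
  exact ⟨left_ne_zero_of_mul hg, right_ne_zero_of_mul hg, add_sub_cancel g a⟩

noncomputable def giventalTerm (h k : LaurentSeries ℂ) (m : ℤ) : ℂ :=
  (m : ℂ)⁻¹ * h.coeff (-m - 1) * k.coeff (m - 1)

section giventalTerm

variable (c : ℂ) (h h₁ h₂ k k₁ k₂ : LaurentSeries ℂ) (m : ℤ)

theorem ite_eq_giventalTerm :
    (if m = 0 then 0 else (m : ℂ)⁻¹ * h.coeff (-m - 1) * k.coeff (m - 1)) = giventalTerm h k m := by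
  split_ifs with hm <;> simp [giventalTerm, hm]

theorem giventalPairing_eq_finsum : giventalPairing h k = ∑ᶠ m, giventalTerm h k m := by
  simp only [giventalPairing, ite_eq_giventalTerm]

theorem finite_support_giventalTerm : (support (giventalTerm h k)).Finite := by
  refine ((h.finite_support_coeff_mul_coeff_sub k (-2)).image fun g => -g - 1).subset
    fun m hm => ⟨-m - 1, ?_, by ring⟩
  have hm' : h.coeff (-m - 1) * k.coeff (m - 1) ≠ 0 :=
    right_ne_zero_of_mul (by rwa [← mul_assoc])
  simpa only [mem_support, show -2 - (-m - 1) = m - 1 by ring] using hm'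

theorem giventalTerm_add_left :
    giventalTerm (h₁ + h₂) k m = giventalTerm h₁ k m + giventalTerm h₂ k m := by
  simp only [giventalTerm, coeff_add]; ring

theorem giventalTerm_add_right :
    giventalTerm h (k₁ + k₂) m = giventalTerm h k₁ m + giventalTerm h k₂ m := by
  simp only [giventalTerm, coeff_add]; ring

theorem giventalTerm_smul_left : giventalTerm (c • h) k m = c * giventalTerm h k m := by
  simp only [giventalTerm, coeff_smul, smul_eq_mul]; ring

theorem giventalTerm_smul_right : giventalTerm h (c • k) m = c * giventalTerm h k m := by
  simp only [giventalTerm, coeff_smul, smul_eq_mul]; ring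

theorem giventalTerm_swap_neg : giventalTerm k h (-m) = -giventalTerm h k m := by
  simp only [giventalTerm, Int.cast_neg, inv_neg, neg_neg]; ring

end giventalTerm

section giventalPairing

variable (c : ℂ) (h h₁ h₂ k k₁ k₂ : LaurentSeries ℂ)

theorem giventalPairing_add_left :
    giventalPairing (h₁ + h₂) k = giventalPairing h₁ k + giventalPairing h₂ k := by
  simp only [giventalPairing_eq_finsum, giventalTerm_add_left]
  exact finsum_add_distrib (finite_support_giventalTerm h₁ k) (finite_support_giventalTerm h₂ k)

theorem giventalPairing_add_right :
    giventalPairing h (k₁ + k₂) = giventalPairing h k₁ + giventalPairing h k₂ := by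
  simp only [giventalPairing_eq_finsum, giventalTerm_add_right]
  exact finsum_add_distrib (finite_support_giventalTerm h k₁) (finite_support_giventalTerm h k₂)

theorem giventalPairing_smul_left : giventalPairing (c • h) k = c * giventalPairing h k := by
  simp only [giventalPairing_eq_finsum, giventalTerm_smul_left, mul_finsum]

theorem giventalPairing_smul_right : giventalPairing h (c • k) = c * giventalPairing h k := by
  simp only [giventalPairing_eq_finsum, giventalTerm_smul_right, mul_finsum]

theorem giventalPairing_swap : giventalPairing k h = -giventalPairing h k := by
  rw [giventalPairing_eq_finsum, giventalPairing_eq_finsum, ← finsum_neg_distrib,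
    ← finsum_comp_equiv (Equiv.neg ℤ)]
  simp only [Equiv.neg_apply, giventalTerm_swap_neg]

theorem giventalPairing_single (j : ℤ) :
    giventalPairing h (single j c) = ((j + 1 : ℤ) : ℂ)⁻¹ * h.coeff (-j - 2) * c := by
  rw [giventalPairing_eq_finsum, finsum_eq_single _ (j + 1)]
  · simp only [giventalTerm, add_sub_cancel_right, coeff_single_same,
      show -(j + 1) - 1 = -j - 2 by ring]
  · intro m hm
    rw [giventalTerm, coeff_single_of_ne (by omega), mul_zero]

theorem eq_zero_of_giventalPairing_single_eq_zero
    (hres : h.coeff (-1) = 0) (hsingle : ∀ j ≠ -1, giventalPairing h (single j 1) = 0) :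
    h = 0 := by
  ext n
  rcases eq_or_ne n (-1) with rfl | hn
  · exact hres
  have hj : -n - 2 ≠ -1 := by omega
  have hcast : ((-n - 2 + 1 : ℤ) : ℂ)⁻¹ ≠ 0 := inv_ne_zero (Int.cast_ne_zero.2 (by omega))
  have hpair := hsingle _ hj
  rw [giventalPairing_single, mul_one, show -(-n - 2) - 2 = n by ring] at hpair
  exact (mul_eq_zero.1 hpair).resolve_left hcast

end giventalPairing

/-- **Even component of the super Givental pairing proposition.**
On the space `W` of residueless formal Laurent series, the sum defining
`E(h,k) = ∑_{m ≠ 0} (1/m)·coeff(-m-1)(h)·coeff(m-1)(k)` has finitely many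
nonzero terms, `E` is ℂ-bilinear, alternating on `W`, and nondegenerate on `W`. -/
theorem givental_pairing_properties :
    (∀ h k : LaurentSeries ℂ,
      (Function.support fun m : ℤ =>
        if m = 0 then 0 else (m : ℂ)⁻¹ * h.coeff (-m - 1) * k.coeff (m - 1)).Finite) ∧
    (∀ h₁ h₂ k : LaurentSeries ℂ,
      giventalPairing (h₁ + h₂) k = giventalPairing h₁ k + giventalPairing h₂ k) ∧
    (∀ (c : ℂ) (h k : LaurentSeries ℂ),
      giventalPairing (c • h) k = c * giventalPairing h k) ∧
    (∀ h k₁ k₂ : LaurentSeries ℂ,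
      giventalPairing h (k₁ + k₂) = giventalPairing h k₁ + giventalPairing h k₂) ∧
    (∀ (c : ℂ) (h k : LaurentSeries ℂ),
      giventalPairing h (c • k) = c * giventalPairing h k) ∧
    (∀ h k : LaurentSeries ℂ, h.coeff (-1) = 0 → k.coeff (-1) = 0 →
      giventalPairing h k = -giventalPairing k h) ∧
    (∀ h : LaurentSeries ℂ, h.coeff (-1) = 0 →
      (∀ k : LaurentSeries ℂ, k.coeff (-1) = 0 → giventalPairing h k = 0) → h = 0) := by
  refine ⟨fun h k => ?_, giventalPairing_add_left, giventalPairing_smul_left,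
    giventalPairing_add_right, giventalPairing_smul_right,
    fun h k _ _ => giventalPairing_swap k h, fun h hres hW => ?_⟩
  · simpa only [ite_eq_giventalTerm] using finite_support_giventalTerm h k
  · exact eq_zero_of_giventalPairing_single_eq_zero h hres fun j hj =>
      hW _ (coeff_single_of_ne (Ne.symm hj))
end
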